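/- Let n = 3·2^s with n ≥ 24, ζ = ζ_n, and R⁺_n = ℤ[ζ + ζ⁻¹, 1/2]. Then (1+ζ)(1+ζ̄) is a unit of R⁺_n that is not a square in (R⁺_n)^×. -/

import Mathlib

/-!
Write `u = (1 + ζ)(1 + ζ⁻¹) = 2 + ζ + ζ⁻¹`. The product of the conjugates `(1 + μ)(1 + μ⁻¹)`
over all primitive `n`-th roots `μ` is `Φₙ(-1)²`, and `Φₙ(-1) = Φ_{n/2}(1) = 1` because `n/2` is
even and not a prime power; each conjugate is a polynomial in `ζ + ζ⁻¹`, so `u⁻¹ ∈ ℤ[ζ + ζ⁻¹]`.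
If `w ∈ ℚ(ζ)` had `w² = u = (1 + ζ)²/ζ`, then `η = (1 + ζ)/w` would satisfy `η² = ζ`, making `η` a
primitive `2n`-th root of unity in `ℚ(ζ)`; this is impossible as `φ(2n) = 2φ(n)` for even `n`.
-/

open Polynomial IntermediateField

theorem pow_add_pow_mem_adjoin_add {R : Type*} [CommRing R] {x y : R} (h : x * y = 1) (k : ℕ) :
    x ^ k + y ^ k ∈ Algebra.adjoin ℤ {x + y} := by
  have hk := (dickson 1 (1 : ℤ) k).aeval_mem_adjoin_singleton ℤ (x + y)
  rwa [aeval_def, eval₂_eq_eval_map, map_dickson, map_one,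
    dickson_one_one_eval_add_inv x y h] at hk

theorem one_add_pow_mul_one_add_inv_pow_mem_adjoin {K : Type*} [Field K] {x : K} (hx : x ≠ 0)
    (k : ℕ) : (1 + x ^ k) * (1 + (x ^ k)⁻¹) ∈ Algebra.adjoin ℤ {x + x⁻¹} := by
  have hxk : (1 + x ^ k) * (1 + (x ^ k)⁻¹) = 2 + (x ^ k + x⁻¹ ^ k) := by
    rw [inv_pow]
    field_simp
    ring
  rw [hxk]
  exact add_mem (ofNat_mem _ 2) (pow_add_pow_mem_adjoin_add (mul_inv_cancel₀ hx) k)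

theorem eval_neg_one_cyclotomic_mul_two {R : Type*} [CommRing R] {m : ℕ} (hm : 2 ∣ m) :
    eval (-1) (cyclotomic (m * 2) R) = eval 1 (cyclotomic m R) := by
  rw [← cyclotomic_expand_eq_cyclotomic Nat.prime_two hm, expand_eval, neg_one_sq]

theorem eval_neg_one_cyclotomic_three_mul_two_pow {R : Type*} [CommRing R] {s : ℕ}
    (hs : 2 ≤ s) : eval (-1) (cyclotomic (3 * 2 ^ s) R) = 1 := by
  obtain ⟨t, rfl⟩ : ∃ t, s = t + 2 := ⟨s - 2, by omega⟩
  have h2 : 2 ∣ 3 * 2 ^ (t + 1) := ⟨3 * 2 ^ t, by ring⟩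
  rw [pow_succ, ← mul_assoc, eval_neg_one_cyclotomic_mul_two h2]
  refine eval_one_cyclotomic_not_prime_pow fun {p} hp k hk => ?_
  have h3 : 3 ∣ p ^ k := hk ▸ Dvd.intro _ rfl
  rw [← hk] at h2
  have := (Nat.prime_dvd_prime_iff_eq Nat.prime_two hp).1 (Nat.prime_two.dvd_of_dvd_pow h2)
  have := (Nat.prime_dvd_prime_iff_eq Nat.prime_three hp).1 (Nat.prime_three.dvd_of_dvd_pow h3)
  omega

namespace IsPrimitiveRoot

theorem prod_one_add_mul_one_add_inv {K : Type*} [Field K] {ζ : K} {n : ℕ}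
    (hζ : IsPrimitiveRoot ζ n) (hn : 0 < n) :
    ∏ μ ∈ primitiveRoots n K, (1 + μ) * (1 + μ⁻¹) = eval (-1) (cyclotomic n K) ^ 2 := by
  have hinv : ∏ μ ∈ primitiveRoots n K, (1 + μ⁻¹) = ∏ μ ∈ primitiveRoots n K, (1 + μ) :=
    Finset.prod_nbij' (·⁻¹) (·⁻¹) (fun μ hμ => by simpa [mem_primitiveRoots hn] using hμ)
      (fun μ hμ => by simpa [mem_primitiveRoots hn] using hμ) (by simp) (by simp) (by simp)
  have heval : eval (-1) (cyclotomic n K) =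
      (-1) ^ (primitiveRoots n K).card * ∏ μ ∈ primitiveRoots n K, (1 + μ) := by
    rw [cyclotomic_eq_prod_X_sub_primitiveRoots hζ, eval_prod, ← Finset.prod_const,
      ← Finset.prod_mul_distrib]
    exact Finset.prod_congr rfl fun μ _ => by simp; ring
  rw [Finset.prod_mul_distrib, hinv, heval, mul_pow, ← pow_mul, pow_mul', neg_one_sq, one_pow,
    one_mul, sq]

theorem inv_one_add_mul_one_add_inv_mem_adjoin {K : Type*} [Field K] {ζ : K} {n : ℕ}
    (hζ : IsPrimitiveRoot ζ n) (hn : 0 < n) (hΦ : eval (-1) (cyclotomic n K) ^ 2 = 1) :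
    ((1 + ζ) * (1 + ζ⁻¹))⁻¹ ∈ Algebra.adjoin ℤ {ζ + ζ⁻¹} := by
  classical
  have : NeZero n := .of_pos hn
  have hprod := hζ.prod_one_add_mul_one_add_inv hn
  rw [hΦ, ← Finset.mul_prod_erase _ _ ((mem_primitiveRoots hn).2 hζ)] at hprod
  rw [inv_eq_of_mul_eq_one_right hprod]
  refine prod_mem fun μ hμ => ?_
  obtain ⟨k, -, rfl⟩ := hζ.eq_pow_of_pow_eq_one
    ((mem_primitiveRoots hn).1 (Finset.mem_of_mem_erase hμ)).pow_eq_one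
  exact one_add_pow_mul_one_add_inv_pow_mem_adjoin (hζ.ne_zero hn.ne') k

theorem of_sq_of_even {M : Type*} [CommMonoid M] {η : M} {n : ℕ}
    (h : IsPrimitiveRoot (η ^ 2) n) (hn : Even n) : IsPrimitiveRoot η (2 * n) := by
  rw [IsPrimitiveRoot.iff_orderOf, orderOf_pow' η two_ne_zero] at *
  rcases Nat.even_or_odd (orderOf η) with hev | hodd
  · rw [Nat.gcd_eq_right (even_iff_two_dvd.1 hev)] at h
    have := Nat.even_iff.1 hev
    omega
  · rw [hodd.coprime_two_right, Nat.div_one] at h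
    exact absurd (h ▸ hn) (Nat.not_even_iff_odd.2 hodd)

variable {L : Type*} [Field L] [CharZero L] {ζ : L} {n : ℕ}

theorem finrank_adjoin_rat (hζ : IsPrimitiveRoot ζ n) (hn : 0 < n) :
    Module.finrank ℚ ℚ⟮ζ⟯ = n.totient := by
  rw [adjoin.finrank (hζ.isIntegral hn).tower_top, ← cyclotomic_eq_minpoly_rat hζ hn,
    natDegree_cyclotomic]

theorem sq_ne_of_mem_adjoin (hζ : IsPrimitiveRoot ζ n) (hn : 0 < n) (hn2 : Even n) {η : L}
    (hη : η ∈ ℚ⟮ζ⟯) : η ^ 2 ≠ ζ := by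
  intro hsq
  have hη' : IsPrimitiveRoot η (2 * n) := (hsq ▸ hζ).of_sq_of_even hn2
  have : FiniteDimensional ℚ ℚ⟮ζ⟯ := adjoin.finiteDimensional (hζ.isIntegral hn).tower_top
  have hle := finrank_le_of_le_right (K := ℚ) (adjoin_simple_le_iff.2 hη)
  rw [hη'.finrank_adjoin_rat (by omega), hζ.finrank_adjoin_rat hn,
    Nat.totient_mul_of_prime_of_dvd Nat.prime_two (even_iff_two_dvd.1 hn2)] at hle
  have := Nat.totient_pos.2 hn
  omega

theorem sq_ne_one_add_mul_one_add_inv (hζ : IsPrimitiveRoot ζ n) (hn : 2 < n) (hn2 : Even n)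
    {w : L} (hw : w ∈ ℚ⟮ζ⟯) : w ^ 2 ≠ (1 + ζ) * (1 + ζ⁻¹) := by
  intro hw2
  have hζ0 : ζ ≠ 0 := hζ.ne_zero (by omega)
  have hζ1 : ζ + 1 ≠ 0 := fun h => by
    have := (IsPrimitiveRoot.neg_one 0 two_ne_zero.symm).unique (eq_neg_of_add_eq_zero_left h ▸ hζ)
    omega
  have hζE : ζ ∈ ℚ⟮ζ⟯ := mem_adjoin_simple_self ℚ ζ
  refine hζ.sq_ne_of_mem_adjoin (by omega) hn2 (ℚ⟮ζ⟯.div_mem (add_mem (one_mem _) hζE) hw) ?_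
  rw [div_pow, hw2]
  field_simp
  ring

end IsPrimitiveRoot

/-- For `n = 3·2^s ≥ 24`: the element `(1+ζ)(1+ζ̄)` (with `ζ̄ = ζ⁻¹`) is a unit of
`R⁺ = ℤ[ζ + ζ⁻¹, 1/2]` that is not the square of a unit of `R⁺`. -/
theorem unit_not_square_three_two_power (s n : ℕ) (hn : n = 3 * 2 ^ s) (hn24 : 24 ≤ n)
    (ζ : ℂ) (hζ : IsPrimitiveRoot ζ n) :
    (1 + ζ) * (1 + ζ⁻¹) ∈ Algebra.adjoin ℤ ({ζ + ζ⁻¹, 2⁻¹} : Set ℂ) ∧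
    ((1 + ζ) * (1 + ζ⁻¹))⁻¹ ∈ Algebra.adjoin ℤ ({ζ + ζ⁻¹, 2⁻¹} : Set ℂ) ∧
    ¬ ∃ w : ℂ, w ∈ Algebra.adjoin ℤ ({ζ + ζ⁻¹, 2⁻¹} : Set ℂ) ∧
      w⁻¹ ∈ Algebra.adjoin ℤ ({ζ + ζ⁻¹, 2⁻¹} : Set ℂ) ∧
      w ^ 2 = (1 + ζ) * (1 + ζ⁻¹) := by
  have hs : 2 ≤ s := by
    by_contra! h
    interval_cases s <;> omega
  have hpos : 0 < n := by omega
  have heven : Even n := hn ▸ (Nat.even_pow.2 ⟨even_two, by omega⟩).mul_left 3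
  have hΦ : eval (-1) (cyclotomic n ℂ) = 1 := hn ▸ eval_neg_one_cyclotomic_three_mul_two_pow hs
  have hle : Algebra.adjoin ℤ {ζ + ζ⁻¹} ≤ Algebra.adjoin ℤ ({ζ + ζ⁻¹, 2⁻¹} : Set ℂ) :=
    Algebra.adjoin_mono (by simp)
  have hζE : ζ ∈ ℚ⟮ζ⟯ := mem_adjoin_simple_self ℚ ζ
  have hleE : Algebra.adjoin ℤ ({ζ + ζ⁻¹, 2⁻¹} : Set ℂ) ≤ ℚ⟮ζ⟯.toSubalgebra.restrictScalars ℤ :=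
    Algebra.adjoin_le (Set.insert_subset_iff.2 ⟨ℚ⟮ζ⟯.add_mem hζE (ℚ⟮ζ⟯.inv_mem hζE),
      Set.singleton_subset_iff.2 (ℚ⟮ζ⟯.inv_mem (ofNat_mem ℚ⟮ζ⟯ 2))⟩)
  refine ⟨hle (by simpa using one_add_pow_mul_one_add_inv_pow_mem_adjoin (hζ.ne_zero hpos.ne') 1),
    hle (hζ.inv_one_add_mul_one_add_inv_mem_adjoin hpos (by rw [hΦ, one_pow])), ?_⟩
  rintro ⟨w, hw, -, hw2⟩
  exact hζ.sq_ne_one_add_mul_one_add_inv (by omega) heven (hleE hw) hw2
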